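/- arXiv:2206.12234 — 7 statements merged into one kernel-verified Lean document; each statement's English description precedes it below -/
import Mathlib

section
/- Let ν = Σ_{i=1}^N α_i δ_{x_i} with α_i > 0 and x_i ∈ S distinct, and let μ be a finite positive Borel measure on S. Then ‖ν − μ‖*_FM = sup over θ ∈ [−1,1]^N of ∫ h_θ d(ν − μ), where h_θ(x) = max(−1, max_{1≤i≤N}(θ_i − d(x_i,x))). -/
/-!
The envelopes `h_θ` with `θ ∈ [-1, 1]^N` are themselves 1-Lipschitz and bounded by 1, so only
`≤` needs an argument. Given an admissible `f`, put `θ i = f (x i)`.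
Then `h_θ ≤ f` everywhere, since `f` is 1-Lipschitz and `f ≥ -1`, and `h_θ = f` at every atom
`x i`. Hence `h_θ` has the same `ν`-integral as `f` and at most its `μ`-integral, so it
does at least as well as `f`.
-/

open MeasureTheory

section ThetaEnvelope

variable {S ι : Type*} [PseudoMetricSpace S]

variable (s : Finset ι) (hs : s.Nonempty) (x : ι → S)

def thetaEnvelope (θ : ι → ℝ) (y : S) : ℝ :=
  max (-1) (s.sup' hs fun i => θ i - dist (x i) y)

theorem lipschitzWith_thetaEnvelope (θ : ι → ℝ) :
    LipschitzWith 1 (thetaEnvelope s hs x θ) := by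
  have hsup : LipschitzWith 1 (s.sup' hs fun i y => θ i - dist (x i) y) :=
    Finset.sup'_induction hs _ (fun g hg h hh => (hg.max hh).weaken (max_self 1).le)
      fun i _ => by simpa using (LipschitzWith.const (θ i)).sub (LipschitzWith.dist_right (x i))
  have := hsup.const_max (-1)
  simp only [Finset.sup'_apply] at this
  exact this

theorem abs_thetaEnvelope_le_one {θ : ι → ℝ} (hθ : ∀ i ∈ s, θ i ≤ 1) (y : S) :
    |thetaEnvelope s hs x θ y| ≤ 1 :=
  abs_le.mpr ⟨le_max_left _ _, max_le (by norm_num) <| Finset.sup'_le _ _ fun i hi => by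
    linarith [hθ i hi, dist_nonneg (x := x i) (y := y)]⟩

variable {f : S → ℝ}

theorem thetaEnvelope_comp_le (hf : LipschitzWith 1 f) (hf₁ : ∀ y, -1 ≤ f y) (y : S) :
    thetaEnvelope s hs x (f ∘ x) y ≤ f y :=
  max_le (hf₁ y) <| Finset.sup'_le _ _ fun i _ =>
    sub_le_iff_le_add.mpr (by simpa using hf.le_add_mul (x i) y)

theorem thetaEnvelope_comp_apply (hf : LipschitzWith 1 f) (hf₁ : ∀ y, -1 ≤ f y) {i : ι}
    (hi : i ∈ s) :
    thetaEnvelope s hs x (f ∘ x) (x i) = f (x i) := by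
  refine (thetaEnvelope_comp_le s hs x hf hf₁ _).antisymm (le_max_of_le_right ?_)
  calc f (x i) = (f ∘ x) i - dist (x i) (x i) := by simp
    _ ≤ _ := Finset.le_sup' (fun j => (f ∘ x) j - dist (x j) (x i)) hi

end ThetaEnvelope

theorem ae_mem_image_finsetSum_dirac {S ι : Type*} [MeasurableSpace S]
    [MeasurableSingletonClass S] (s : Finset ι) (c : ι → ENNReal) (x : ι → S) :
    ∀ᵐ y ∂(∑ i ∈ s, c i • Measure.dirac (x i)), y ∈ x '' s := by
  rw [ae_iff, Measure.finsetSum_apply]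
  refine Finset.sum_eq_zero fun i hi => ?_
  rw [Measure.smul_apply, Measure.dirac_apply,
    Set.indicator_of_notMem (not_not_intro (Set.mem_image_of_mem x hi)), smul_zero]

theorem LipschitzWith.integrable_of_abs_le_one {S : Type*} [PseudoMetricSpace S]
    [MeasurableSpace S] [OpensMeasurableSpace S] {μ : Measure S} [IsFiniteMeasure μ]
    {f : S → ℝ} (hf : LipschitzWith 1 f) (hf₁ : ∀ y, |f y| ≤ 1) : Integrable f μ :=
  .of_bound hf.continuous.aestronglyMeasurable 1 (ae_of_all _ hf₁)

theorem sSup_integral_sub_lipschitz_eq_sSup_integral_sub_thetaEnvelope {S ι : Type*}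
    [PseudoMetricSpace S] [MeasurableSpace S] [OpensMeasurableSpace S]
    (s : Finset ι) (hs : s.Nonempty) (x : ι → S) (ν μ : Measure S) [IsFiniteMeasure μ]
    (hν : ∀ᵐ y ∂ν, y ∈ x '' s) :
    sSup {r : ℝ | ∃ f : S → ℝ, LipschitzWith 1 f ∧ (∀ y, |f y| ≤ 1) ∧
        r = ∫ y, f y ∂ν - ∫ y, f y ∂μ}
      = sSup {r : ℝ | ∃ θ : ι → ℝ, (∀ i, θ i ∈ Set.Icc (-1 : ℝ) 1) ∧
        r = ∫ y, thetaEnvelope s hs x θ y ∂ν - ∫ y, thetaEnvelope s hs x θ y ∂μ} := by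
  refine csSup_eq_csSup_of_forall_exists_le ?_ ?_
  · rintro _ ⟨f, hf, hf₁, rfl⟩
    have hθ : ∀ i, (f ∘ x) i ∈ Set.Icc (-1 : ℝ) 1 := fun i => abs_le.mp (hf₁ (x i))
    have hf_ge : ∀ y, -1 ≤ f y := fun y => (abs_le.mp (hf₁ y)).1
    have hν_eq : ∫ y, thetaEnvelope s hs x (f ∘ x) y ∂ν = ∫ y, f y ∂ν :=
      integral_congr_ae <| hν.mono fun _ ⟨i, hi, hy⟩ =>
        hy ▸ thetaEnvelope_comp_apply s hs x hf hf_ge hi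
    have hμ_le : ∫ y, thetaEnvelope s hs x (f ∘ x) y ∂μ ≤ ∫ y, f y ∂μ :=
      integral_mono
        ((lipschitzWith_thetaEnvelope s hs x _).integrable_of_abs_le_one
          (abs_thetaEnvelope_le_one s hs x fun i _ => (hθ i).2))
        (hf.integrable_of_abs_le_one hf₁) (thetaEnvelope_comp_le s hs x hf hf_ge)
    exact ⟨_, ⟨f ∘ x, hθ, rfl⟩, by linarith⟩
  · rintro _ ⟨θ, hθ, rfl⟩
    exact ⟨_, ⟨_, lipschitzWith_thetaEnvelope s hs x θ,
      abs_thetaEnvelope_le_one s hs x fun i _ => (hθ i).2, rfl⟩, le_rfl⟩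

theorem stmt_3_general {S : Type*} [MetricSpace S] [MeasurableSpace S] [BorelSpace S]
    {N : ℕ} (hN : 0 < N) (x : Fin N → S)
    (α : Fin N → ℝ)
    (μ : Measure S) [IsFiniteMeasure μ] :
    let ν : Measure S := ∑ i, ENNReal.ofReal (α i) • Measure.dirac (x i)
    let hθ : (Fin N → ℝ) → S → ℝ := fun θ y =>
      max (-1) (Finset.univ.sup' ⟨⟨0, hN⟩, Finset.mem_univ _⟩
        (fun i => θ i - dist (x i) y))
    sSup {r : ℝ | ∃ f : S → ℝ, LipschitzWith 1 f ∧ (∀ y, |f y| ≤ 1) ∧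
        r = ∫ y, f y ∂ν - ∫ y, f y ∂μ}
      = sSup {r : ℝ | ∃ θ : Fin N → ℝ, (∀ i, θ i ∈ Set.Icc (-1 : ℝ) 1) ∧
        r = ∫ y, hθ θ y ∂ν - ∫ y, hθ θ y ∂μ} :=
  sSup_integral_sub_lipschitz_eq_sSup_integral_sub_thetaEnvelope _ _ x _ μ
    (ae_mem_image_finsetSum_dirac _ _ x)

/-- Theorem 2.1 (dimensional reduction via thetas). -/
theorem stmt_3 {S : Type*} [MetricSpace S] [MeasurableSpace S] [BorelSpace S]
    {N : ℕ} (hN : 0 < N) (x : Fin N → S) (hx : Function.Injective x)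
    (α : Fin N → ℝ) (hα : ∀ i, 0 < α i)
    (μ : Measure S) [IsFiniteMeasure μ] :
    let ν : Measure S := ∑ i, ENNReal.ofReal (α i) • Measure.dirac (x i)
    let hθ : (Fin N → ℝ) → S → ℝ := fun θ y =>
      max (-1) (Finset.univ.sup' ⟨⟨0, hN⟩, Finset.mem_univ _⟩
        (fun i => θ i - dist (x i) y))
    sSup {r : ℝ | ∃ f : S → ℝ, LipschitzWith 1 f ∧ (∀ y, |f y| ≤ 1) ∧
        r = ∫ y, f y ∂ν - ∫ y, f y ∂μ}
      = sSup {r : ℝ | ∃ θ : Fin N → ℝ, (∀ i, θ i ∈ Set.Icc (-1 : ℝ) 1) ∧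
        r = ∫ y, hθ θ y ∂ν - ∫ y, hθ θ y ∂μ} :=
  stmt_3_general hN x α μ
end

section
/- For x ∈ S and μ a Borel probability measure on S, ‖δ_x − μ‖*_FM = ∫_S min(2, d(x,y)) dμ(y). -/
open MeasureTheory

/-- ‖δ_x − μ‖*_FM = ∫ min(2, d(x,y)) dμ for probability μ. -/
theorem stmt_5 {S : Type*} [MetricSpace S] [MeasurableSpace S] [BorelSpace S]
    (x : S) (μ : Measure S) [IsProbabilityMeasure μ] :
    sSup {r : ℝ | ∃ f : S → ℝ, LipschitzWith 1 f ∧ (∀ y, |f y| ≤ 1) ∧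
        r = ∫ y, f y ∂(Measure.dirac x) - ∫ y, f y ∂μ}
      = ∫ y, min 2 (dist x y) ∂μ := by
  have hmin_int : Integrable (fun y => min 2 (dist x y)) μ := by
    refine (integrable_const (2 : ℝ)).mono' ?_ ?_
    · exact (continuous_const.min (continuous_const.dist continuous_id)).aestronglyMeasurable
    · filter_upwards with y
      rw [Real.norm_eq_abs, abs_of_nonneg (le_min (by norm_num) dist_nonneg)]
      exact min_le_left _ _
  -- the witness function
  set g : S → ℝ := fun y => 1 - min 2 (dist x y) with hg
  have hgLip : LipschitzWith 1 g := by
    have h1 : LipschitzWith 1 (fun y => dist x y) := LipschitzWith.dist_right x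
    have h2 : LipschitzWith 1 (fun y => min 2 (dist x y)) := by
      simpa using h1.const_min 2
    refine LipschitzWith.of_dist_le_mul fun a b => ?_
    have := h2.dist_le_mul a b
    simp only [hg, Real.dist_eq, NNReal.coe_one, one_mul] at this ⊢
    rw [show (1 - 2 ⊓ dist x a) - (1 - 2 ⊓ dist x b) = -(2 ⊓ dist x a - 2 ⊓ dist x b) by ring,
      abs_neg]
    exact this
  have hgbd : ∀ y, |g y| ≤ 1 := by
    intro y
    rw [abs_le]
    constructor
    · have : min 2 (dist x y) ≤ 2 := min_le_left _ _
      simp only [hg]; linarith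
    · have : (0:ℝ) ≤ min 2 (dist x y) := le_min (by norm_num) dist_nonneg
      simp only [hg]; linarith
  have hginteg : Integrable g μ := by
    refine (integrable_const (1 : ℝ)).mono' ?_ ?_
    · exact (continuous_const.sub
        (continuous_const.min (continuous_const.dist continuous_id))).aestronglyMeasurable
    · filter_upwards with y
      simpa [Real.norm_eq_abs] using hgbd y
  have hgval : (∫ y, g y ∂(Measure.dirac x)) - ∫ y, g y ∂μ
      = ∫ y, min 2 (dist x y) ∂μ := by
    rw [integral_dirac]
    have : (∫ y, g y ∂μ) = (∫ _, (1:ℝ) ∂μ) - ∫ y, min 2 (dist x y) ∂μ := by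
      rw [← integral_sub (integrable_const 1) hmin_int]
    rw [this]
    simp [hg]
  have hmem : (∫ y, min 2 (dist x y) ∂μ) ∈ {r : ℝ | ∃ f : S → ℝ, LipschitzWith 1 f ∧
      (∀ y, |f y| ≤ 1) ∧ r = ∫ y, f y ∂(Measure.dirac x) - ∫ y, f y ∂μ} :=
    ⟨g, hgLip, hgbd, hgval.symm⟩
  have hub : ∀ r ∈ {r : ℝ | ∃ f : S → ℝ, LipschitzWith 1 f ∧ (∀ y, |f y| ≤ 1) ∧
      r = ∫ y, f y ∂(Measure.dirac x) - ∫ y, f y ∂μ}, r ≤ ∫ y, min 2 (dist x y) ∂μ := by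
    rintro r ⟨f, hfLip, hfbd, rfl⟩
    rw [integral_dirac]
    have hfint : Integrable f μ := by
      refine (integrable_const (1 : ℝ)).mono' ?_ ?_
      · exact hfLip.continuous.aestronglyMeasurable
      · filter_upwards with y
        simpa [Real.norm_eq_abs] using hfbd y
    have : f x - ∫ y, f y ∂μ = ∫ y, f x - f y ∂μ := by
      rw [integral_sub (integrable_const _) hfint]
      simp
    rw [this]
    refine integral_mono ((integrable_const _).sub hfint) hmin_int ?_
    intro y
    have h1 : f x - f y ≤ dist x y := by
      have := hfLip.dist_le_mul x y
      rw [Real.dist_eq] at this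
      have := abs_le.mp (by simpa using this)
      linarith [this.2]
    have h2 : f x - f y ≤ 2 := by
      have hx := abs_le.mp (hfbd x)
      have hy := abs_le.mp (hfbd y)
      linarith [hx.2, hy.1]
    exact le_min h2 h1
  exact le_antisymm (csSup_le ⟨_, hmem⟩ hub) (le_csSup ⟨_, hub⟩ hmem)
end

section
/- Let x, y₁, y₂ ∈ S and 0 ≤ α ≤ 1. Then ‖δ_x − αδ_{y₁} − (1−α)δ_{y₂}‖*_FM = α·min(2, d(x,y₁)) + (1−α)·min(2, d(x,y₂)). -/
/-!
A test function `f` with `‖f‖_∞ ≤ 1` and `|f|_L ≤ 1` satisfies `f x - f y ≤ min 2 (d x y)`, so the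
functional `f x - α f y₁ - (1 - α) f y₂` is at most the claimed value. The single test function
`1 - min 2 (d x ·)` attains both gaps at once, so the supremum is a maximum.
-/

open MeasureTheory

section Dirac

variable {S : Type*} [MeasurableSpace S] [MeasurableSingletonClass S]

theorem integral_ofReal_smul_dirac (f : S → ℝ) (y : S) {a : ℝ} (ha : 0 ≤ a) :
    ∫ z, f z ∂(ENNReal.ofReal a • Measure.dirac y) = a * f y := by
  rw [integral_smul_measure, integral_dirac, ENNReal.toReal_ofReal ha, smul_eq_mul]

theorem integrable_ofReal_smul_dirac (f : S → ℝ) (y : S) (a : ℝ) :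
    Integrable f (ENNReal.ofReal a • Measure.dirac y) :=
  (integrable_dirac enorm_lt_top).smul_measure ENNReal.ofReal_ne_top

theorem integral_dirac_sub_convexCombination_dirac (f : S → ℝ) (x y₁ y₂ : S) {α : ℝ}
    (hα0 : 0 ≤ α) (hα1 : α ≤ 1) :
    ∫ z, f z ∂(Measure.dirac x) - ∫ z, f z ∂(ENNReal.ofReal α • Measure.dirac y₁ +
        ENNReal.ofReal (1 - α) • Measure.dirac y₂) =
      f x - (α * f y₁ + (1 - α) * f y₂) := by
  rw [integral_dirac, integral_add_measure (integrable_ofReal_smul_dirac f y₁ α)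
    (integrable_ofReal_smul_dirac f y₂ (1 - α)), integral_ofReal_smul_dirac f y₁ hα0,
    integral_ofReal_smul_dirac f y₂ (sub_nonneg.2 hα1)]

end Dirac

section BoundedLipschitz

variable {S : Type*} [PseudoMetricSpace S]

theorem LipschitzWith.sub_le_min_two_dist {f : S → ℝ} (hf : LipschitzWith 1 f)
    (hb : ∀ z, |f z| ≤ 1) (x y : S) : f x - f y ≤ min 2 (dist x y) := by
  refine le_min ?_ ?_
  · linarith [(abs_le.1 (hb x)).2, (abs_le.1 (hb y)).1]
  · simpa [Real.dist_eq] using (le_abs_self _).trans (hf.dist_le_mul x y)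

theorem lipschitzWith_one_sub_min_two_dist (x : S) :
    LipschitzWith 1 fun z => 1 - min 2 (dist x z) := by
  have : LipschitzWith 1 fun z => min 2 (dist x z) := by
    simpa using (LipschitzWith.const' (2 : ℝ) (K := 1)).min (LipschitzWith.dist_right x)
  simpa using (LipschitzWith.const' (1 : ℝ) (K := 0)).sub this

theorem abs_one_sub_min_two_dist_le_one (x z : S) : |1 - min 2 (dist x z)| ≤ 1 := by
  have h0 : 0 ≤ min 2 (dist x z) := le_min zero_le_two dist_nonneg
  rw [abs_le]
  constructor <;> linarith [min_le_left 2 (dist x z)]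

end BoundedLipschitz

/-- distance from a Dirac to a convex combination of two Diracs. -/
theorem stmt_8 {S : Type*} [MetricSpace S] [MeasurableSpace S] [BorelSpace S]
    (x y₁ y₂ : S) (α : ℝ) (hα0 : 0 ≤ α) (hα1 : α ≤ 1) :
    sSup {r : ℝ | ∃ f : S → ℝ, LipschitzWith 1 f ∧ (∀ z, |f z| ≤ 1) ∧
        r = ∫ z, f z ∂(Measure.dirac x) -
          ∫ z, f z ∂(ENNReal.ofReal α • Measure.dirac y₁ +
            ENNReal.ofReal (1 - α) • Measure.dirac y₂)}
      = α * min 2 (dist x y₁) + (1 - α) * min 2 (dist x y₂) := by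
  simp_rw [integral_dirac_sub_convexCombination_dirac _ x y₁ y₂ hα0 hα1]
  refine IsGreatest.csSup_eq ⟨?_, ?_⟩
  · refine ⟨fun z => 1 - min 2 (dist x z), lipschitzWith_one_sub_min_two_dist x,
      abs_one_sub_min_two_dist_le_one x, ?_⟩
    simp only [dist_self, min_eq_right zero_le_two]
    ring
  · rintro r ⟨f, hf, hb, rfl⟩
    have h₁ := mul_le_mul_of_nonneg_left (hf.sub_le_min_two_dist hb x y₁) hα0
    have h₂ := mul_le_mul_of_nonneg_left (hf.sub_le_min_two_dist hb x y₂) (sub_nonneg.2 hα1)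
    linarith
end

section
/- Let λ be Lebesgue measure on [0,1] and x ∈ [0,1]. Then ‖δ_x − λ‖*_FM = 1/2 − x + x², and the minimum over x ∈ [0,1] is 1/4, attained uniquely at x = 1/2. -/
open MeasureTheory

lemma icc_integral_abs (x : Set.Icc (0:ℝ) 1) :
    ∫ y : Set.Icc (0:ℝ) 1, |(y:ℝ) - x| = 1/2 - x + x^2 := by
  rw [integral_subtype measurableSet_Icc (fun t : ℝ => |t - (x:ℝ)|)]
  obtain ⟨x, hx0, hx1⟩ := x
  simp only
  rw [MeasureTheory.integral_Icc_eq_integral_Ioc,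
    ← intervalIntegral.integral_of_le (by norm_num : (0:ℝ) ≤ 1),
    ← intervalIntegral.integral_add_adjacent_intervals (a := 0) (b := x) (c := 1)]
  · rw [intervalIntegral.integral_congr (a := (0:ℝ)) (b := x) (g := fun t => x - t)
      (by intro t ht; rw [Set.uIcc_of_le hx0] at ht; simp only;
          rw [abs_of_nonpos (by linarith [ht.2])]; ring),
      intervalIntegral.integral_congr (a := x) (b := (1:ℝ)) (g := fun t => t - x)
      (by intro t ht; rw [Set.uIcc_of_le hx1] at ht; simp only;
          rw [abs_of_nonneg (by linarith [ht.1])])]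
    rw [intervalIntegral.integral_sub intervalIntegrable_const intervalIntegral.intervalIntegrable_id,
      intervalIntegral.integral_sub intervalIntegral.intervalIntegrable_id intervalIntegrable_const]
    simp [integral_id]
    ring
  · exact ((continuous_id.sub continuous_const).abs.intervalIntegrable _ _)
  · exact ((continuous_id.sub continuous_const).abs.intervalIntegrable _ _)

lemma lam_univ : (volume : Measure (Set.Icc (0:ℝ) 1)) Set.univ = 1 := by
  rw [Measure.Subtype.volume_univ nullMeasurableSet_Icc]; simp

instance : IsProbabilityMeasure (volume : Measure (Set.Icc (0:ℝ) 1)) := ⟨lam_univ⟩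

lemma cont_integrable (f : Set.Icc (0:ℝ) 1 → ℝ) (hf : Continuous f) :
    Integrable f (volume : Measure (Set.Icc (0:ℝ) 1)) :=
  hf.integrable_of_hasCompactSupport (HasCompactSupport.of_compactSpace f)

lemma fm_eq (x : Set.Icc (0:ℝ) 1) :
    sSup {r : ℝ | ∃ f : Set.Icc (0:ℝ) 1 → ℝ, LipschitzWith 1 f ∧ (∀ y, |f y| ≤ 1) ∧
        r = ∫ y, f y ∂(Measure.dirac x) - ∫ y, f y ∂(volume : Measure (Set.Icc (0:ℝ) 1))}
      = 1/2 - (x:ℝ) + (x:ℝ)^2 := by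
  set lam : Measure (Set.Icc (0:ℝ) 1) := volume
  set V : ℝ := 1/2 - (x:ℝ) + (x:ℝ)^2 with hV
  have habs : Continuous (fun y : Set.Icc (0:ℝ) 1 => |(y:ℝ) - (x:ℝ)|) :=
    (continuous_subtype_val.sub continuous_const).abs
  have hub : ∀ r ∈ {r : ℝ | ∃ f : Set.Icc (0:ℝ) 1 → ℝ, LipschitzWith 1 f ∧ (∀ y, |f y| ≤ 1) ∧
      r = ∫ y, f y ∂(Measure.dirac x) - ∫ y, f y ∂lam}, r ≤ V := by
    rintro r ⟨f, hlip, _, hr⟩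
    rw [integral_dirac] at hr
    have hint : Integrable f lam := cont_integrable f hlip.continuous
    have key : f x - ∫ y, f y ∂lam = ∫ y, (f x - f y) ∂lam := by
      rw [integral_sub (integrable_const _) hint, integral_const]
      simp [lam_univ]
    rw [hr, key]
    calc ∫ y, (f x - f y) ∂lam ≤ ∫ y, |(y:ℝ) - (x:ℝ)| ∂lam := by
          apply integral_mono ((integrable_const _).sub hint) (cont_integrable _ habs)
          intro y
          have := hlip.dist_le_mul x y
          simp only [NNReal.coe_one, one_mul] at this
          have h2 : dist (x : Set.Icc (0:ℝ) 1) y = |(y:ℝ) - (x:ℝ)| := by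
            rw [Subtype.dist_eq, Real.dist_eq, abs_sub_comm]
          calc f x - f y ≤ |f x - f y| := le_abs_self _
            _ = dist (f x) (f y) := (Real.dist_eq _ _).symm
            _ ≤ dist (x : Set.Icc (0:ℝ) 1) y := this
            _ = |(y:ℝ) - (x:ℝ)| := h2
      _ = V := icc_integral_abs x
  have hmem : V ∈ {r : ℝ | ∃ f : Set.Icc (0:ℝ) 1 → ℝ, LipschitzWith 1 f ∧ (∀ y, |f y| ≤ 1) ∧
      r = ∫ y, f y ∂(Measure.dirac x) - ∫ y, f y ∂lam} := by
    refine ⟨fun y => -|(y:ℝ) - (x:ℝ)|, ?_, ?_, ?_⟩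
    · have : LipschitzWith 1 (fun y : Set.Icc (0:ℝ) 1 => |(y:ℝ) - (x:ℝ)|) := by
        have h := LipschitzWith.dist_left (x : Set.Icc (0:ℝ) 1)
        have heq : (fun y : Set.Icc (0:ℝ) 1 => |(y:ℝ) - (x:ℝ)|) =
            (fun y : Set.Icc (0:ℝ) 1 => dist y x) := by
          funext y; rw [Subtype.dist_eq, Real.dist_eq]
        rw [heq]; exact fun a b => by simpa [dist_comm] using h a b
      exact this.neg
    · intro y
      rw [abs_neg, abs_abs]
      rw [abs_le]
      constructor <;> nlinarith [x.2.1, x.2.2, y.2.1, y.2.2]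
    · rw [integral_dirac]
      simp only [sub_self, abs_zero, neg_zero]
      rw [integral_neg, icc_integral_abs]
      ring
  exact le_antisymm (csSup_le ⟨V, hmem⟩ hub) (le_csSup ⟨V, hub⟩ hmem)

/-- distance from δ_x to Lebesgue measure on [0,1]. -/
theorem stmt_9 :
    let I := Set.Icc (0 : ℝ) 1
    let lam : Measure I := volume
    let FM : I → ℝ := fun x =>
      sSup {r : ℝ | ∃ f : I → ℝ, LipschitzWith 1 f ∧ (∀ y, |f y| ≤ 1) ∧
        r = ∫ y, f y ∂(Measure.dirac x) - ∫ y, f y ∂lam}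
    (∀ x : I, FM x = 1 / 2 - (x : ℝ) + (x : ℝ) ^ 2) ∧
    (∀ x : I, (1 / 4 : ℝ) ≤ FM x) ∧
    (∀ x : I, FM x = 1 / 4 ↔ (x : ℝ) = 1 / 2) := by
  intro I lam FM
  have hFM : ∀ x : I, FM x = 1 / 2 - (x : ℝ) + (x : ℝ) ^ 2 := fun x => fm_eq x
  refine ⟨hFM, ?_, ?_⟩
  · intro x; rw [hFM x]; nlinarith [sq_nonneg ((x:ℝ) - 1/2)]
  · intro x
    rw [hFM x]
    constructor
    · intro h
      have h0 : ((x:ℝ) - 1/2)^2 = 0 := by nlinarith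
      have := pow_eq_zero_iff (n := 2) (by norm_num) |>.mp h0
      linarith
    · intro h; rw [h]; norm_num
end

section
/- Let x ∈ S and μ a finite positive Borel measure on S. Define θ₀ := min(2, inf{r ≥ 0 : μ(B(x,r)) ≥ 1}) − 1 ∈ [−1,1] (with inf ∅ = +∞). Then ‖δ_x − μ‖*_FM = ∫ max(−1, θ₀ − d(x,·)) d(δ_x − μ). -/
/-!
A test function `f` (1-Lipschitz, `|f| ≤ 1`) dominates the truncated cone
`y ↦ max (-1) (f x - d(x, y))`, which has the same value at `x`; so the supremum is attained
among these cones and only their height `θ` remains to be optimised. Raising the height from `θ`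
to `θ'` raises the integral by at most `(θ' - θ) μ(B(x, θ' + 1))` and by at least
`(θ' - θ) μ(B̄(x, θ + 1))`, so `θ ↦ θ - ∫ cone_θ dμ` is maximal at the height `θ₀` where the mass
of the ball of radius `θ₀ + 1` crosses `1`.
-/

open MeasureTheory Metric Filter
open scoped ENNReal

section BallMeasure

variable {S : Type*} [PseudoMetricSpace S] [MeasurableSpace S] (μ : Measure S) (x : S)
  {a : ℝ≥0∞} {t : ℝ}

theorem measure_ball_le_of_forall_lt (h : ∀ r < t, μ (ball x r) ≤ a) : μ (ball x t) ≤ a := by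
  obtain ⟨u, hu_mono, hu_lt, hu_lim⟩ := exists_seq_strictMono_tendsto t
  have hunion : ball x t = ⋃ n, ball x (u n) := by
    refine subset_antisymm (fun y hy => ?_)
      (Set.iUnion_subset fun n => ball_subset_ball (hu_lt n).le)
    obtain ⟨n, hn⟩ := (hu_lim.eventually (lt_mem_nhds (mem_ball.1 hy))).exists
    exact Set.mem_iUnion.2 ⟨n, hn⟩
  rw [hunion, Monotone.measure_iUnion fun m n hmn => ball_subset_ball (hu_mono.monotone hmn)]
  exact iSup_le fun n => h _ (hu_lt n)

theorem le_measure_closedBall_of_forall_gt [OpensMeasurableSpace S] [IsFiniteMeasure μ]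
    (h : ∀ r > t, a ≤ μ (ball x r)) : a ≤ μ (closedBall x t) := by
  have hlim := tendsto_measure_biInter_gt (μ := μ) (s := ball x) (a := t)
    (fun _ _ => measurableSet_ball.nullMeasurableSet) (fun _ _ _ hij => ball_subset_ball hij)
    ⟨t + 1, by linarith, measure_ne_top μ _⟩
  rw [biInter_gt_ball] at hlim
  exact ge_of_tendsto hlim (eventually_nhdsWithin_of_forall h)

end BallMeasure

section MassRadius

variable {S : Type*} [PseudoMetricSpace S] [MeasurableSpace S] (μ : Measure S) (x : S)
  (m : ℝ≥0∞) {t : ℝ}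

noncomputable def massRadius : ℝ≥0∞ :=
  ⨅ r ∈ {r : ℝ | 0 ≤ r ∧ m ≤ μ (ball x r)}, ENNReal.ofReal r

variable {μ x m}

theorem massRadius_le_of_lt_measure_ball {r : ℝ} (h : m < μ (ball x r)) :
    massRadius μ x m ≤ ENNReal.ofReal r := by
  have hr : 0 ≤ r := by
    by_contra! hr
    simp [ball_eq_empty.2 hr.le] at h
  exact iInf₂_le r ⟨hr, h.le⟩

theorem le_measure_ball_of_massRadius_lt {r : ℝ} (h : massRadius μ x m < ENNReal.ofReal r) :
    m ≤ μ (ball x r) := by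
  obtain ⟨r', ⟨-, hr'⟩, hlt⟩ := by simpa only [massRadius, iInf_lt_iff] using h
  exact hr'.trans (measure_mono (ball_subset_ball (ENNReal.ofReal_lt_ofReal_iff'.1 hlt).1.le))

theorem measure_ball_le_of_ofReal_le_massRadius (h : ENNReal.ofReal t ≤ massRadius μ x m) :
    μ (ball x t) ≤ m := by
  refine measure_ball_le_of_forall_lt μ x fun r hr => ?_
  by_contra! hm
  rcases ENNReal.ofReal_le_ofReal_iff'.1 (h.trans (massRadius_le_of_lt_measure_ball hm)) with
    ht | ht
  · exact ht.not_gt hr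
  · simp [ball_eq_empty.2 (hr.trans_le ht).le] at hm

theorem le_measure_closedBall_of_massRadius_le [OpensMeasurableSpace S] [IsFiniteMeasure μ]
    (ht : 0 ≤ t) (h : massRadius μ x m ≤ ENNReal.ofReal t) : m ≤ μ (closedBall x t) :=
  le_measure_closedBall_of_forall_gt μ x fun _ hr =>
    le_measure_ball_of_massRadius_lt <|
      h.trans_lt ((ENNReal.ofReal_lt_ofReal_iff (ht.trans_lt hr)).2 hr)

theorem measure_ball_toReal_massRadius_inf_le {c : ℝ≥0∞} (hc : c ≠ ⊤) :
    μ (ball x (massRadius μ x m ⊓ c).toReal) ≤ m :=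
  measure_ball_le_of_ofReal_le_massRadius <|
    (ENNReal.ofReal_toReal (ne_top_of_le_ne_top hc inf_le_right)).trans_le inf_le_left

theorem le_measure_closedBall_toReal_massRadius_inf [OpensMeasurableSpace S] [IsFiniteMeasure μ]
    {c : ℝ≥0∞} (hc : c ≠ ⊤) (h : (massRadius μ x m ⊓ c).toReal < c.toReal) :
    m ≤ μ (closedBall x (massRadius μ x m ⊓ c).toReal) := by
  have hlt : massRadius μ x m < c :=
    (inf_lt_iff.1 ((ENNReal.toReal_lt_toReal (ne_top_of_le_ne_top hc inf_le_right) hc).1 h)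
      ).resolve_right (lt_irrefl c)
  refine le_measure_closedBall_of_massRadius_le ENNReal.toReal_nonneg ?_
  rw [inf_eq_left.2 hlt.le, ENNReal.ofReal_toReal hlt.ne_top]

end MassRadius

section TruncCone

variable {S : Type*} [PseudoMetricSpace S] (x : S) {θ θ' : ℝ}

def truncCone (θ : ℝ) (y : S) : ℝ :=
  max (-1) (θ - dist x y)

theorem neg_one_le_truncCone (θ : ℝ) (y : S) : -1 ≤ truncCone x θ y :=
  le_max_left _ _

theorem sub_dist_le_truncCone (θ : ℝ) (y : S) : θ - dist x y ≤ truncCone x θ y :=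
  le_max_right _ _

theorem lipschitzWith_truncCone (θ : ℝ) : LipschitzWith 1 (truncCone x θ) := by
  unfold truncCone
  simpa using (LipschitzWith.const (-1 : ℝ)).max
    ((LipschitzWith.const θ).sub (LipschitzWith.dist_right x))

theorem abs_truncCone_le (θ : ℝ) (y : S) : |truncCone x θ y| ≤ max 1 |θ| :=
  abs_le.2 ⟨by linarith [le_max_left (1 : ℝ) |θ|, neg_one_le_truncCone x θ y],
    max_le_max (by norm_num) (by linarith [le_abs_self θ, dist_nonneg (x := x) (y := y)])⟩

theorem truncCone_self (hθ : -1 ≤ θ) : truncCone x θ x = θ := by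
  simp [truncCone, hθ]

variable {x}

theorem truncCone_le_of_lipschitzWith {f : S → ℝ} (hf : LipschitzWith 1 f) (hf₁ : ∀ y, -1 ≤ f y)
    (y : S) : truncCone x (f x) y ≤ f y := by
  have := (abs_le.1 (by simpa [Real.dist_eq] using hf.dist_le_mul x y)).2
  exact max_le (hf₁ y) (by linarith)

theorem truncCone_sub_le_indicator (hθ : θ ≤ θ') (y : S) :
    truncCone x θ' y - truncCone x θ y ≤ (ball x (θ' + 1)).indicator (fun _ => θ' - θ) y := by
  by_cases hy : y ∈ ball x (θ' + 1)
  · rw [Set.indicator_of_mem hy]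
    have : truncCone x θ' y ≤ truncCone x θ y + (θ' - θ) :=
      max_le (by linarith [neg_one_le_truncCone x θ y])
        (by linarith [sub_dist_le_truncCone x θ y])
    linarith
  · rw [Set.indicator_of_notMem hy]
    rw [mem_ball', not_lt] at hy
    have : truncCone x θ' y = -1 := max_eq_left (by linarith)
    linarith [neg_one_le_truncCone x θ y]

theorem indicator_le_truncCone_sub (hθ : θ ≤ θ') (y : S) :
    (closedBall x (θ + 1)).indicator (fun _ => θ' - θ) y ≤ truncCone x θ' y - truncCone x θ y := by
  by_cases hy : y ∈ closedBall x (θ + 1)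
  · rw [Set.indicator_of_mem hy]
    rw [mem_closedBall'] at hy
    rw [truncCone, truncCone, max_eq_right (by linarith), max_eq_right (by linarith)]
    linarith
  · rw [Set.indicator_of_notMem hy, sub_nonneg]
    exact max_le_max le_rfl (by linarith)

end TruncCone

theorem Continuous.integrable_of_abs_le {S : Type*} [TopologicalSpace S] [MeasurableSpace S]
    [OpensMeasurableSpace S] {μ : Measure S} [IsFiniteMeasure μ] {f : S → ℝ} (hf : Continuous f)
    {C : ℝ} (hC : ∀ y, |f y| ≤ C) : Integrable f μ :=
  .of_bound hf.aestronglyMeasurable C (ae_of_all _ hC)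

section IntegralTruncCone

variable {S : Type*} [PseudoMetricSpace S] [MeasurableSpace S] [OpensMeasurableSpace S]
  (μ : Measure S) [IsFiniteMeasure μ] (x : S) {θ θ' : ℝ}

theorem integrable_truncCone (θ : ℝ) : Integrable (truncCone x θ) μ :=
  (lipschitzWith_truncCone x θ).continuous.integrable_of_abs_le (abs_truncCone_le x θ)

theorem integral_truncCone_sub_le (hθ : θ ≤ θ') :
    ∫ y, truncCone x θ' y ∂μ - ∫ y, truncCone x θ y ∂μ ≤ μ.real (ball x (θ' + 1)) * (θ' - θ) :=
  calc ∫ y, truncCone x θ' y ∂μ - ∫ y, truncCone x θ y ∂μ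
      = ∫ y, (truncCone x θ' y - truncCone x θ y) ∂μ :=
        (integral_sub (integrable_truncCone μ x θ') (integrable_truncCone μ x θ)).symm
    _ ≤ ∫ y, (ball x (θ' + 1)).indicator (fun _ => θ' - θ) y ∂μ :=
        integral_mono ((integrable_truncCone μ x θ').sub (integrable_truncCone μ x θ))
          ((integrable_const _).indicator measurableSet_ball) (truncCone_sub_le_indicator hθ)
    _ = μ.real (ball x (θ' + 1)) * (θ' - θ) := integral_indicator_const _ measurableSet_ball

theorem le_integral_truncCone_sub (hθ : θ ≤ θ') :
    μ.real (closedBall x (θ + 1)) * (θ' - θ) ≤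
      ∫ y, truncCone x θ' y ∂μ - ∫ y, truncCone x θ y ∂μ :=
  calc μ.real (closedBall x (θ + 1)) * (θ' - θ)
      = ∫ y, (closedBall x (θ + 1)).indicator (fun _ => θ' - θ) y ∂μ :=
        (integral_indicator_const _ measurableSet_closedBall).symm
    _ ≤ ∫ y, (truncCone x θ' y - truncCone x θ y) ∂μ :=
        integral_mono ((integrable_const _).indicator measurableSet_closedBall)
          ((integrable_truncCone μ x θ').sub (integrable_truncCone μ x θ))
          (indicator_le_truncCone_sub hθ)
    _ = ∫ y, truncCone x θ' y ∂μ - ∫ y, truncCone x θ y ∂μ :=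
        integral_sub (integrable_truncCone μ x θ') (integrable_truncCone μ x θ)

variable {μ x}

theorem sub_integral_truncCone_le {θ₀ : ℝ} (hball : μ.real (ball x (θ₀ + 1)) ≤ 1)
    (hclosedBall : θ₀ < θ → 1 ≤ μ.real (closedBall x (θ₀ + 1))) :
    θ - ∫ y, truncCone x θ y ∂μ ≤ θ₀ - ∫ y, truncCone x θ₀ y ∂μ := by
  rcases le_or_gt θ θ₀ with hθ | hθ
  · have := integral_truncCone_sub_le μ x hθ
    nlinarith [measureReal_nonneg (μ := μ) (s := ball x (θ₀ + 1))]
  · have := le_integral_truncCone_sub μ x hθ.le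
    nlinarith [hclosedBall hθ]

theorem sub_integral_le_of_lipschitzWith {θ₀ : ℝ} (hball : μ.real (ball x (θ₀ + 1)) ≤ 1)
    (hclosedBall : θ₀ < 1 → 1 ≤ μ.real (closedBall x (θ₀ + 1))) {f : S → ℝ}
    (hf : LipschitzWith 1 f) (hf₁ : ∀ y, |f y| ≤ 1) :
    f x - ∫ y, f y ∂μ ≤ θ₀ - ∫ y, truncCone x θ₀ y ∂μ :=
  calc f x - ∫ y, f y ∂μ ≤ f x - ∫ y, truncCone x (f x) y ∂μ :=
        sub_le_sub_left (integral_mono (integrable_truncCone μ x _)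
          (hf.continuous.integrable_of_abs_le hf₁)
          (truncCone_le_of_lipschitzWith hf fun y => (abs_le.1 (hf₁ y)).1)) _
    _ ≤ θ₀ - ∫ y, truncCone x θ₀ y ∂μ :=
        sub_integral_truncCone_le hball fun h => hclosedBall (h.trans_le (abs_le.1 (hf₁ x)).2)

theorem isGreatest_sub_integral_lipschitzWith {θ₀ : ℝ} (hθ₀ : |θ₀| ≤ 1)
    (hball : μ.real (ball x (θ₀ + 1)) ≤ 1)
    (hclosedBall : θ₀ < 1 → 1 ≤ μ.real (closedBall x (θ₀ + 1))) :
    IsGreatest {r | ∃ f : S → ℝ, LipschitzWith 1 f ∧ (∀ y, |f y| ≤ 1) ∧ r = f x - ∫ y, f y ∂μ}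
      (θ₀ - ∫ y, truncCone x θ₀ y ∂μ) := by
  refine ⟨⟨truncCone x θ₀, lipschitzWith_truncCone x θ₀, fun y => ?_, ?_⟩, ?_⟩
  · simpa [hθ₀] using abs_truncCone_le x θ₀ y
  · rw [truncCone_self x (abs_le.1 hθ₀).1]
  · rintro r ⟨f, hf, hf₁, rfl⟩
    exact sub_integral_le_of_lipschitzWith hball hclosedBall hf hf₁

end IntegralTruncCone

/-- The infimum is taken in `ℝ≥0∞` so that `inf ∅ = ∞` (and `min(2, ∞) = 2`). -/
theorem stmt_10 {S : Type*} [MetricSpace S] [MeasurableSpace S] [BorelSpace S]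
    (x : S) (μ : Measure S) [IsFiniteMeasure μ] :
    let θ0 : ℝ :=
      ((⨅ r ∈ {r : ℝ | 0 ≤ r ∧ 1 ≤ μ (Metric.ball x r)}, ENNReal.ofReal r) ⊓ 2).toReal - 1
    sSup {r : ℝ | ∃ f : S → ℝ, LipschitzWith 1 f ∧ (∀ y, |f y| ≤ 1) ∧
        r = ∫ y, f y ∂(Measure.dirac x) - ∫ y, f y ∂μ}
      = ∫ y, max (-1) (θ0 - dist x y) ∂(Measure.dirac x) -
          ∫ y, max (-1) (θ0 - dist x y) ∂μ := by
  intro θ0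
  have hθ0 : θ0 + 1 = (massRadius μ x 1 ⊓ 2).toReal := sub_add_cancel _ _
  clear_value θ0
  have hθ0_abs : |θ0| ≤ 1 := by
    have h2 : (massRadius μ x 1 ⊓ 2).toReal ≤ 2 :=
      ENNReal.toReal_le_of_le_ofReal zero_le_two <|
        inf_le_right.trans_eq (ENNReal.ofReal_ofNat 2).symm
    exact abs_le.2 ⟨by linarith [ENNReal.toReal_nonneg (a := massRadius μ x 1 ⊓ 2)], by linarith⟩
  have hball : μ.real (ball x (θ0 + 1)) ≤ 1 := by
    rw [hθ0]
    exact ENNReal.toReal_le_of_le_ofReal zero_le_one <|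
      (measure_ball_toReal_massRadius_inf_le ENNReal.ofNat_ne_top).trans_eq ENNReal.ofReal_one.symm
  have hclosedBall (h : θ0 < 1) : 1 ≤ μ.real (closedBall x (θ0 + 1)) := by
    rw [hθ0]
    exact (ENNReal.ofReal_le_iff_le_toReal (measure_ne_top _ _)).1 <| ENNReal.ofReal_one.trans_le <|
      le_measure_closedBall_toReal_massRadius_inf ENNReal.ofNat_ne_top <| by
        rw [← hθ0, ENNReal.toReal_ofNat]
        linarith
  simp only [integral_dirac]
  exact (isGreatest_sub_integral_lipschitzWith hθ0_abs hball hclosedBall).csSup_eq.trans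
    (congrArg (· - _) (truncCone_self x (abs_le.1 hθ0_abs).1).symm)
end

section
/- For x, y ∈ S and α, β > 0, ‖αδ_x − βδ_y‖*_FM = |α − β| + min(α,β)·min(2, d(x,y)). -/
open MeasureTheory

/-- ‖αδ_x − βδ_y‖*_FM = |α−β| + min(α,β)·min(2,d(x,y)). -/
theorem stmt_12 {S : Type*} [MetricSpace S] [MeasurableSpace S] [BorelSpace S]
    (x y : S) (α β : ℝ) (hα : 0 < α) (hβ : 0 < β) :
    sSup {r : ℝ | ∃ f : S → ℝ, LipschitzWith 1 f ∧ (∀ z, |f z| ≤ 1) ∧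
        r = ∫ z, f z ∂(ENNReal.ofReal α • Measure.dirac x) -
          ∫ z, f z ∂(ENNReal.ofReal β • Measure.dirac y)}
      = |α - β| + min α β * min 2 (dist x y) := by
  have hdnn : 0 ≤ dist x y := dist_nonneg
  have hint : ∀ (c : ℝ) (p : S) (f : S → ℝ), 0 ≤ c → Continuous f →
      (∫ z, f z ∂(ENNReal.ofReal c • Measure.dirac p)) = c * f p := by
    intro c p f hc hf
    rw [integral_smul_measure, integral_dirac' f p hf.measurable.stronglyMeasurable,
      ENNReal.toReal_ofReal hc, smul_eq_mul]
  have hub : ∀ r ∈ {r : ℝ | ∃ f : S → ℝ, LipschitzWith 1 f ∧ (∀ z, |f z| ≤ 1) ∧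
        r = ∫ z, f z ∂(ENNReal.ofReal α • Measure.dirac x) -
          ∫ z, f z ∂(ENNReal.ofReal β • Measure.dirac y)},
      r ≤ |α - β| + min α β * min 2 (dist x y) := by
    rintro r ⟨f, hlip, hbd, rfl⟩
    rw [hint α x f hα.le hlip.continuous, hint β y f hβ.le hlip.continuous]
    have hx := abs_le.1 (hbd x)
    have hy := abs_le.1 (hbd y)
    have h1 : f x - f y ≤ min 2 (dist x y) := by
      refine le_min (by linarith [hx.2, hy.1]) ?_
      have h2 := hlip.dist_le_mul x y
      rw [Real.dist_eq] at h2
      calc f x - f y ≤ |f x - f y| := le_abs_self _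
        _ ≤ 1 * dist x y := h2
        _ = dist x y := one_mul _
    rcases le_total β α with h | h
    · rw [abs_of_nonneg (by linarith), min_eq_right h]
      have h2 : β * (f x - f y) ≤ β * min 2 (dist x y) :=
        mul_le_mul_of_nonneg_left h1 hβ.le
      have h3 : (α - β) * f x ≤ (α - β) * 1 :=
        mul_le_mul_of_nonneg_left hx.2 (by linarith)
      nlinarith
    · rw [abs_of_nonpos (by linarith), min_eq_left h]
      have h2 : α * (f x - f y) ≤ α * min 2 (dist x y) :=
        mul_le_mul_of_nonneg_left h1 hα.le
      have h3 : (β - α) * (-1) ≤ (β - α) * f y :=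
        mul_le_mul_of_nonneg_left hy.1 (by linarith)
      nlinarith
  have hmem : |α - β| + min α β * min 2 (dist x y) ∈
      {r : ℝ | ∃ f : S → ℝ, LipschitzWith 1 f ∧ (∀ z, |f z| ≤ 1) ∧
        r = ∫ z, f z ∂(ENNReal.ofReal α • Measure.dirac x) -
          ∫ z, f z ∂(ENNReal.ofReal β • Measure.dirac y)} := by
    rcases le_total β α with h | h
    · refine ⟨fun z => max (-1) (1 - dist z x), ?_, ?_, ?_⟩
      · exact (LipschitzWith.const (-1)).max
          ((LipschitzWith.const 1).sub (LipschitzWith.dist_left x)) |>.weaken (by norm_num)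
      · intro z
        rw [abs_le]
        constructor
        · exact le_max_left _ _
        · exact max_le (by norm_num) (by linarith [dist_nonneg (x := z) (y := x)])
      · have hlip : LipschitzWith 1 (fun z => max (-1) (1 - dist z x)) :=
          (LipschitzWith.const (-1)).max
            ((LipschitzWith.const 1).sub (LipschitzWith.dist_left x)) |>.weaken (by norm_num)
        rw [hint α x _ hα.le hlip.continuous, hint β y _ hβ.le hlip.continuous]
        have hfx : max (-1 : ℝ) (1 - dist x x) = 1 := by simp
        have hfy : max (-1 : ℝ) (1 - dist y x) = 1 - min 2 (dist x y) := by
          rw [dist_comm y x]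
          rcases le_total (2 : ℝ) (dist x y) with h2 | h2
          · rw [min_eq_left h2, max_eq_left (by linarith)]; norm_num
          · rw [min_eq_right h2, max_eq_right (by linarith)]
        simp only [hfx, hfy]
        rw [abs_of_nonneg (by linarith), min_eq_right h]
        ring
    · refine ⟨fun z => min 1 (dist z y - 1), ?_, ?_, ?_⟩
      · exact (LipschitzWith.const 1).min
          ((LipschitzWith.dist_left y).sub (LipschitzWith.const 1)) |>.weaken (by norm_num)
      · intro z
        rw [abs_le]
        constructor
        · exact le_min (by norm_num) (by linarith [dist_nonneg (x := z) (y := y)])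
        · exact min_le_left _ _
      · have hlip : LipschitzWith 1 (fun z => min 1 (dist z y - 1)) :=
          (LipschitzWith.const 1).min
            ((LipschitzWith.dist_left y).sub (LipschitzWith.const 1)) |>.weaken (by norm_num)
        rw [hint α x _ hα.le hlip.continuous, hint β y _ hβ.le hlip.continuous]
        have hfy : min (1 : ℝ) (dist y y - 1) = -1 := by simp
        have hfx : min (1 : ℝ) (dist x y - 1) = min 2 (dist x y) - 1 := by
          rcases le_total (2 : ℝ) (dist x y) with h2 | h2
          · rw [min_eq_left h2, min_eq_left (by linarith)]; norm_num
          · rw [min_eq_right h2, min_eq_right (by linarith)]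
        simp only [hfx, hfy]
        rw [abs_of_nonpos (by linarith), min_eq_left h]
        ring
  exact le_antisymm (csSup_le ⟨_, hmem⟩ hub)
    (le_csSup ⟨_, hub⟩ hmem)
end

section
/- Let τ = Σ_{i=1}^n α_i δ_{x_i} with x_i distinct in S and α_i ∈ ℝ nonzero, and P = {x₁,…,x_n}. Then ‖τ‖*_FM = max over vectors f ∈ ℝ^n satisfying |f_k| ≤ 1 for all k and |f_i − f_j| ≤ d(x_i,x_j) for all i ≠ j, of Σ_i α_i f_i; in particular the supremum is attained. -/
/-- ‖τ‖*_FM of a molecular measure is attained as a maximum over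
the polytope {|f_k| ≤ 1, |f_i − f_j| ≤ d(x_i,x_j)}. Here ∫ g dτ = Σ α_i g(x_i). -/
theorem stmt_18 {S : Type*} [MetricSpace S] {n : ℕ}
    (x : Fin n → S) (hx : Function.Injective x)
    (α : Fin n → ℝ) (hα : ∀ i, α i ≠ 0) :
    ∃ v : Fin n → ℝ, (∀ k, |v k| ≤ 1) ∧
      (∀ i j, i ≠ j → |v i - v j| ≤ dist (x i) (x j)) ∧
      sSup {r : ℝ | ∃ g : S → ℝ, LipschitzWith 1 g ∧ (∀ y, |g y| ≤ 1) ∧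
          r = ∑ i, α i * g (x i)} = ∑ i, α i * v i ∧
      ∀ w : Fin n → ℝ, (∀ k, |w k| ≤ 1) →
        (∀ i j, i ≠ j → |w i - w j| ≤ dist (x i) (x j)) →
        ∑ i, α i * w i ≤ ∑ i, α i * v i := by
  classical
  set K : Set (Fin n → ℝ) :=
    {w | (∀ k, |w k| ≤ 1) ∧ ∀ i j, i ≠ j → |w i - w j| ≤ dist (x i) (x j)} with hKdef
  have h0K : (0 : Fin n → ℝ) ∈ K := by
    constructor
    · intro k; simp
    · intro i j _; simp [dist_nonneg]
  -- K is closed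
  have hKclosed : IsClosed K := by
    have h1 : IsClosed {w : Fin n → ℝ | ∀ k, |w k| ≤ 1} := by
      have : {w : Fin n → ℝ | ∀ k, |w k| ≤ 1} = ⋂ k, {w | |w k| ≤ 1} := by
        ext w; simp
      rw [this]
      exact isClosed_iInter fun k =>
        isClosed_le ((continuous_apply k).abs) continuous_const
    have h2 : IsClosed {w : Fin n → ℝ |
        ∀ i j, i ≠ j → |w i - w j| ≤ dist (x i) (x j)} := by
      have : {w : Fin n → ℝ | ∀ i j, i ≠ j → |w i - w j| ≤ dist (x i) (x j)}
          = ⋂ i, ⋂ j, {w | i ≠ j → |w i - w j| ≤ dist (x i) (x j)} := by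
        ext w; simp
      rw [this]
      refine isClosed_iInter fun i => isClosed_iInter fun j => ?_
      by_cases hij : i = j
      · simp [hij]
      · have : {w : Fin n → ℝ | i ≠ j → |w i - w j| ≤ dist (x i) (x j)}
            = {w | |w i - w j| ≤ dist (x i) (x j)} := by
          ext w; simp [hij]
        rw [this]
        exact isClosed_le (((continuous_apply i).sub (continuous_apply j)).abs)
          continuous_const
    have : K = {w : Fin n → ℝ | ∀ k, |w k| ≤ 1} ∩
        {w | ∀ i j, i ≠ j → |w i - w j| ≤ dist (x i) (x j)} := rfl
    rw [this]; exact h1.inter h2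
  -- K is compact
  have hKcompact : IsCompact K := by
    have hsub : K ⊆ Set.pi Set.univ (fun _ : Fin n => Set.Icc (-1 : ℝ) 1) := by
      intro w hw k _
      exact abs_le.mp (hw.1 k)
    exact (isCompact_univ_pi fun _ => isCompact_Icc).of_isClosed_subset hKclosed hsub
  -- the linear functional is continuous
  have hcont : Continuous (fun w : Fin n → ℝ => ∑ i, α i * w i) :=
    continuous_finset_sum _ fun i _ => continuous_const.mul (continuous_apply i)
  obtain ⟨v, hvK, hvmax⟩ :=
    hKcompact.exists_isMaxOn ⟨0, h0K⟩ hcont.continuousOn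
  have hmax : ∀ w ∈ K, ∑ i, α i * w i ≤ ∑ i, α i * v i := fun w hw => hvmax hw
  refine ⟨v, hvK.1, hvK.2, ?_, fun w hw1 hw2 => hmax w ⟨hw1, hw2⟩⟩
  -- construct the McShane-type extension g with g (x i) = v i
  have hmem : ∃ g : S → ℝ, LipschitzWith 1 g ∧ (∀ y, |g y| ≤ 1) ∧
      (∑ i, α i * v i) = ∑ i, α i * g (x i) := by
    rcases Nat.eq_zero_or_pos n with hn | hn
    · exact ⟨fun _ => 0, by simpa using LipschitzWith.const' (0 : ℝ),
        fun y => by simp, by subst hn; simp⟩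
    haveI : Nonempty (Fin n) := Fin.pos_iff_nonempty.mp hn
    set F : S → ℝ := fun y =>
      (Finset.univ : Finset (Fin n)).inf' Finset.univ_nonempty
        (fun i => v i + dist y (x i)) with hF
    have key : ∀ y z : S, F y ≤ F z + dist y z := by
      intro y z
      obtain ⟨i, -, hi⟩ := Finset.exists_mem_eq_inf' (Finset.univ_nonempty)
        (fun i => v i + dist z (x i))
      have h1 : F y ≤ v i + dist y (x i) :=
        Finset.inf'_le _ (Finset.mem_univ i)
      have h2 : dist y (x i) ≤ dist y z + dist z (x i) := dist_triangle _ _ _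
      have h3 : F z = v i + dist z (x i) := hi
      linarith
    have hFlip : LipschitzWith 1 F := by
      apply LipschitzWith.of_dist_le_mul
      intro y z
      rw [NNReal.coe_one, one_mul, Real.dist_eq, abs_sub_le_iff]
      constructor
      · have := key y z; linarith
      · have := key z y; rw [dist_comm z y] at this; linarith
    have hFx : ∀ j, F (x j) = v j := by
      intro j
      apply le_antisymm
      · have h := Finset.inf'_le (b := j) (fun i => v i + dist (x j) (x i))
          (Finset.mem_univ j)
        simpa only [dist_self, add_zero] using h
      · apply Finset.le_inf'
        intro i _
        by_cases hij : i = j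
        · subst hij; simp
        · have := hvK.2 j i (fun h => hij h.symm)
          have h1 : v j - v i ≤ |v j - v i| := le_abs_self _
          have h2 : dist (x j) (x i) = dist (x i) (x j) := dist_comm _ _
          have h3 : dist (x j) (x i) ≥ 0 := dist_nonneg
          nlinarith [abs_nonneg (v j - v i)]
    set g : S → ℝ := fun y => max (-1) (min 1 (F y)) with hg
    have hglip : LipschitzWith 1 g :=
      ((LipschitzWith.const' (1 : ℝ)).weaken (zero_le_one)).min hFlip
        |>.const_max (-1) |>.weaken (by simp)
    have hgb : ∀ y, |g y| ≤ 1 := by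
      intro y
      rw [abs_le]
      constructor
      · exact le_max_left _ _
      · exact max_le (by norm_num) (min_le_left _ _)
    have hgx : ∀ j, g (x j) = v j := by
      intro j
      have h1 := abs_le.mp (hvK.1 j)
      rw [hg]
      simp only [hFx j]
      rw [min_eq_right h1.2, max_eq_right h1.1]
    refine ⟨g, hglip, hgb, ?_⟩
    exact Finset.sum_congr rfl fun i _ => by rw [hgx i]
  obtain ⟨g0, hg0⟩ := hmem
  have hmemset : (∑ i, α i * v i) ∈ {r : ℝ | ∃ g : S → ℝ, LipschitzWith 1 g ∧
      (∀ y, |g y| ≤ 1) ∧ r = ∑ i, α i * g (x i)} := ⟨g0, hg0⟩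
  have hub : ∀ r ∈ {r : ℝ | ∃ g : S → ℝ, LipschitzWith 1 g ∧
      (∀ y, |g y| ≤ 1) ∧ r = ∑ i, α i * g (x i)}, r ≤ ∑ i, α i * v i := by
    rintro r ⟨g, hgl, hgb, rfl⟩
    refine hmax (fun i => g (x i)) ⟨fun k => hgb _, fun i j hij => ?_⟩
    have := hgl.dist_le_mul (x i) (x j)
    rw [NNReal.coe_one, one_mul, Real.dist_eq] at this
    exact this
  exact le_antisymm (csSup_le ⟨_, hmemset⟩ hub) (le_csSup ⟨_, hub⟩ hmemset)
end
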